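/- The candidate value function J(x,y,z,t) = (x^{α_m}/α_m)(y^{α_g}/α_g)(z^{α_b}/α_b) · exp(b(T−t)), with b = (1/2)λ₁²σ₁² α_m/(1−α_m) + (1/2)λ_g²σ₂² α_g/(1−α_g) + (1/2)λ_b²σ₃² α_b/(1−α_b) + (θ_m α_m + θ_g α_g + θ_b α_b) r, satisfies the PDE J_t − (1/2)λ₁²σ₁² J_x²/J_{xx} − (1/2)λ_g²σ₂² J_y²/J_{yy} − (1/2)λ_b²σ₃² J_z²/J_{zz} + J_x x θ_m r + J_y y θ_g r + J_z z θ_b r = 0 for all x,y,z > 0 and t ≤ T. -/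

import Mathlib

/-!
`J` separates into power utilities of `x`, `y`, `z` times an exponential in `t`. A power
utility `u x = x ^ α / α * C` satisfies `x u' = α u` and `u' ^ 2 / u'' = α / (α - 1) u`, and
`J_t = -b J`, so every term of the PDE is a constant multiple of `J`; the constants cancel
by the choice of `b`.
-/

open Real Topology

section PowerUtility

variable {α C x : ℝ} {f : ℝ → ℝ}

lemma deriv_eq_of_eq_rpow_div_mul (hf : ∀ x, f x = x ^ α / α * C) (hα : α ≠ 0)
    (hx : 0 < x) : deriv f x = x ^ (α - 1) * C := by
  rw [funext hf, (((hasDerivAt_rpow_const (Or.inl hx.ne')).div_const α).mul_const C).deriv]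
  field_simp

lemma deriv_mul_self_of_eq_rpow_div_mul (hf : ∀ x, f x = x ^ α / α * C) (hα : α ≠ 0)
    (hx : 0 < x) : deriv f x * x = α * f x := by
  rw [deriv_eq_of_eq_rpow_div_mul hf hα hx, hf, mul_right_comm, ← rpow_add_one hx.ne']
  field_simp
  ring_nf

lemma deriv_deriv_of_eq_rpow_div_mul (hf : ∀ x, f x = x ^ α / α * C) (hα : α ≠ 0)
    (hx : 0 < x) : deriv (deriv f) x = (α - 1) * x ^ (α - 2) * C := by
  have hf' : deriv f =ᶠ[𝓝 x] fun x' => x' ^ (α - 1) * C := by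
    filter_upwards [Ioi_mem_nhds hx] with x' hx'
    exact deriv_eq_of_eq_rpow_div_mul hf hα hx'
  rw [hf'.deriv_eq, ((hasDerivAt_rpow_const (Or.inl hx.ne')).mul_const C).deriv]
  ring_nf

lemma mul_sq_deriv_div_deriv_deriv_of_eq_rpow_div_mul (c : ℝ)
    (hf : ∀ x, f x = x ^ α / α * C) (hα₀ : α ≠ 0) (hα₁ : α ≠ 1) (hx : 0 < x) :
    c * deriv f x ^ 2 / deriv (deriv f) x = -(c * (α / (1 - α)) * f x) := by
  have hsq : (x ^ (α - 1)) ^ 2 = x ^ α * x ^ (α - 2) := by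
    rw [sq, ← rpow_add hx, ← rpow_add hx]
    ring_nf
  have hα₁' : 1 - α ≠ 0 := sub_ne_zero.mpr hα₁.symm
  have hx₂ : x ^ (α - 2) ≠ 0 := (rpow_pos_of_pos hx _).ne'
  rw [deriv_eq_of_eq_rpow_div_mul hf hα₀ hx, deriv_deriv_of_eq_rpow_div_mul hf hα₀ hx, hf,
    mul_pow, hsq]
  rcases eq_or_ne C 0 with rfl | hC
  · simp
  · field_simp
    ring

end PowerUtility

lemma deriv_eq_neg_mul_of_eq_mul_exp {g : ℝ → ℝ} {K b T : ℝ}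
    (hg : ∀ s, g s = K * exp (b * (T - s))) (t : ℝ) : deriv g t = -b * g t := by
  have hlin : HasDerivAt (fun s => b * (T - s)) (-b) t := by
    simpa using ((hasDerivAt_id t).const_sub T).const_mul b
  rw [funext hg, (hlin.exp.const_mul K).deriv]
  ring

/-- The candidate value function
`J(x,y,z,t) = (x^αm/αm)(y^αg/αg)(z^αb/αb) exp(b(T-t))` satisfies the reduced
HJB PDE for all `x,y,z > 0` and `t ≤ T`. -/
theorem value_function_solves_PDE
    (αm αg αb lam1 lamg lamb σ1 σ2 σ3 θm θg θb r T : ℝ)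
    (ham : αm < 0) (hag : αg < 0) (hab : αb < 0)
    (b : ℝ)
    (hbdef : b = (1/2) * lam1^2 * σ1^2 * (αm / (1 - αm))
      + (1/2) * lamg^2 * σ2^2 * (αg / (1 - αg))
      + (1/2) * lamb^2 * σ3^2 * (αb / (1 - αb))
      + (θm * αm + θg * αg + θb * αb) * r)
    (J : ℝ → ℝ → ℝ → ℝ → ℝ)
    (hJ : J = fun x y z t =>
      (x ^ αm / αm) * (y ^ αg / αg) * (z ^ αb / αb) * Real.exp (b * (T - t))) :
    ∀ x y z t : ℝ, 0 < x → 0 < y → 0 < z → t ≤ T →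
      deriv (fun s => J x y z s) t
        - (1/2) * lam1^2 * σ1^2 *
            (deriv (fun x' => J x' y z t) x) ^ 2
            / (deriv (fun x' => deriv (fun x'' => J x'' y z t) x') x)
        - (1/2) * lamg^2 * σ2^2 *
            (deriv (fun y' => J x y' z t) y) ^ 2
            / (deriv (fun y' => deriv (fun y'' => J x y'' z t) y') y)
        - (1/2) * lamb^2 * σ3^2 *
            (deriv (fun z' => J x y z' t) z) ^ 2
            / (deriv (fun z' => deriv (fun z'' => J x y z'' t) z') z)
        + (deriv (fun x' => J x' y z t) x) * x * θm * r
        + (deriv (fun y' => J x y' z t) y) * y * θg * r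
        + (deriv (fun z' => J x y z' t) z) * z * θb * r = 0 := by
  intro x y z t hx hy hz _
  have hJx (x' : ℝ) : J x' y z t
      = x' ^ αm / αm * (y ^ αg / αg * (z ^ αb / αb) * exp (b * (T - t))) := by
    rw [hJ]; ring
  have hJy (y' : ℝ) : J x y' z t
      = y' ^ αg / αg * (x ^ αm / αm * (z ^ αb / αb) * exp (b * (T - t))) := by
    rw [hJ]; ring
  have hJz (z' : ℝ) : J x y z' t
      = z' ^ αb / αb * (x ^ αm / αm * (y ^ αg / αg) * exp (b * (T - t))) := by
    rw [hJ]; ring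
  have hJt (s : ℝ) :
      J x y z s = x ^ αm / αm * (y ^ αg / αg) * (z ^ αb / αb) * exp (b * (T - s)) := by
    rw [hJ]
  rw [deriv_eq_neg_mul_of_eq_mul_exp hJt,
    mul_sq_deriv_div_deriv_deriv_of_eq_rpow_div_mul _ hJx ham.ne (by linarith) hx,
    mul_sq_deriv_div_deriv_deriv_of_eq_rpow_div_mul _ hJy hag.ne (by linarith) hy,
    mul_sq_deriv_div_deriv_deriv_of_eq_rpow_div_mul _ hJz hab.ne (by linarith) hz,
    deriv_mul_self_of_eq_rpow_div_mul hJx ham.ne hx,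
    deriv_mul_self_of_eq_rpow_div_mul hJy hag.ne hy,
    deriv_mul_self_of_eq_rpow_div_mul hJz hab.ne hz, hbdef]
  ring
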